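/- arXiv:2012.02261 — 2 statements merged into one kernel-verified Lean document; each statement's English description precedes it below -/
import Mathlib

section
/- Let Ω ⊂ ℝ^N be a bounded domain (with Lebesgue measure) and let w ∈ L¹(Ω) be measurable. Suppose there exist α > 1 and A > 0 such that for every k > 0, ∫_Ω |S_k(w)| dx ≤ A · |{x ∈ Ω : |w(x)| > k}|^α, where |·| denotes Lebesgue measure. Then w ∈ L^∞(Ω) and there exists a constant c > 0 depending only on α such that ‖w‖_{L^∞(Ω)} ≤ c · A^{1/α} · ‖w‖_{L¹(Ω)}^{1−1/α}. -/
/-!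
Write `φ(k) = |{|w| > k}|`. Since `|S_k(t)| = (|t| - k)⁺ ≥ h - k` wherever `|t| > h`, the hypothesis
gives the Stampacchia recursion `(h - k) φ(h) ≤ A φ(k)^α` for `0 < k < h`. Iterating it along
`k_n = k₀ + d (1 - 2⁻ⁿ)` makes `φ(k_n)` decay like `κ⁻ⁿ` with `κ = 2^{1/(α-1)}`, provided
`d ≥ 2κ A φ(k₀)^{α-1}`; hence `φ(k₀ + d) = 0`. With `k₀ = A^{1/α} ‖w‖₁^{1-1/α}`, Chebyshev's
inequality `k₀ φ(k₀) ≤ ‖w‖₁` allows `d = 2κ k₀`, so `|w| ≤ (1 + 2κ) k₀` almost everywhere.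
-/

open Real MeasureTheory

/-- The truncation `S_k : ℝ → ℝ`:
`S_k(t) = t + k` if `t < -k`, `S_k(t) = 0` if `-k ≤ t ≤ k`, `S_k(t) = t - k` if `t > k`. -/
noncomputable def Sk (k t : ℝ) : ℝ :=
  if t < -k then t + k else if t ≤ k then 0 else t - k

open Filter Set Topology

lemma Sk_zero (t : ℝ) : Sk 0 t = t := by
  unfold Sk
  split_ifs <;> linarith

lemma abs_Sk {k : ℝ} (hk : 0 ≤ k) (t : ℝ) : |Sk k t| = max (|t| - k) 0 := by
  unfold Sk
  split_ifs with h₁ h₂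
  · rw [abs_of_neg (by linarith), abs_of_neg (by linarith), max_eq_left (by linarith)]
    ring
  · rw [abs_zero, max_eq_right (by linarith [abs_le.mpr ⟨by linarith, h₂⟩])]
  · rw [abs_of_pos (by linarith), abs_of_pos (by linarith), max_eq_left (by linarith)]

lemma rpow_eq_rpow_sub_one_mul {α x : ℝ} (hx : 0 ≤ x) (hα : 1 < α) :
    x ^ α = x ^ (α - 1) * x := by
  rw [← rpow_add_one' hx (by linarith), sub_add_cancel]

lemma two_rpow_inv_sub_one_rpow {α : ℝ} (hα : 1 < α) :
    ((2 : ℝ) ^ (α - 1)⁻¹) ^ α = 2 * 2 ^ (α - 1)⁻¹ := by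
  have hα₁ : α - 1 ≠ 0 := by linarith
  rw [← rpow_mul zero_le_two, ← rpow_one_add' zero_le_two (by positivity)]
  congr 1
  field_simp
  ring

lemma mul_rpow_sub_one_le_of_mul_le {α A I y : ℝ} (hα : 1 < α) (hA : 0 < A) (hI : 0 < I)
    (hy : 0 ≤ y) (hyI : A ^ (1 / α) * I ^ (1 - 1 / α) * y ≤ I) :
    A * y ^ (α - 1) ≤ A ^ (1 / α) * I ^ (1 - 1 / α) := by
  set k := A ^ (1 / α) * I ^ (1 - 1 / α)
  have hk : 0 < k := by positivity
  have hkα : k ^ α = A * I ^ (α - 1) := by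
    rw [mul_rpow (by positivity) (by positivity), ← rpow_mul hA.le, ← rpow_mul hI.le,
      one_div_mul_cancel (by positivity), rpow_one]
    congr 2
    field_simp
  calc A * y ^ (α - 1) ≤ A * (I / k) ^ (α - 1) := by
        gcongr
        rwa [le_div_iff₀ hk, mul_comm]
    _ = k := by
        rw [div_rpow hI.le hk.le, ← mul_div_assoc, ← hkα, rpow_eq_rpow_sub_one_mul hk.le hα]
        field_simp

section Iteration

variable {φ : ℝ → ℝ} {A α k₀ d : ℝ}

lemma le_div_pow_of_sub_mul_le_rpow (hα : 1 < α) (hA : 0 ≤ A) (hφ0 : ∀ k, 0 ≤ φ k)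
    (hrec : ∀ k h, k₀ ≤ k → k < h → (h - k) * φ h ≤ A * φ k ^ α) (hd : 0 < d)
    (hdφ : 2 * 2 ^ (α - 1)⁻¹ * A * φ k₀ ^ (α - 1) ≤ d) (n : ℕ) :
    φ (k₀ + d - d / 2 ^ n) ≤ φ k₀ / (2 ^ (α - 1)⁻¹) ^ n := by
  have hκ : (0 : ℝ) < 2 ^ (α - 1)⁻¹ := by positivity
  have hP := hφ0 k₀
  induction n with
  | zero => simp
  | succ n ih =>
    set k := k₀ + d - d / 2 ^ n
    set h := k₀ + d - d / 2 ^ (n + 1)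
    have hgap : h - k = d / 2 ^ (n + 1) := by
      simp only [h, k]
      field_simp
      ring
    have hk : k₀ ≤ k := by
      simp only [k]
      linarith [div_le_self hd.le (one_le_pow₀ (M₀ := ℝ) one_le_two (n := n))]
    have hgap_pos : 0 < h - k := by rw [hgap]; positivity
    have hbound : A * φ k ^ α ≤ (h - k) * (φ k₀ / (2 ^ (α - 1)⁻¹) ^ (n + 1)) :=
      calc A * φ k ^ α ≤ A * (φ k₀ / (2 ^ (α - 1)⁻¹) ^ n) ^ α := by
            gcongr
            exact hφ0 k
        _ = 2 * 2 ^ (α - 1)⁻¹ * A * φ k₀ ^ (α - 1) / 2 ^ (n + 1) *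
              (φ k₀ / (2 ^ (α - 1)⁻¹) ^ (n + 1)) := by
          rw [div_rpow hP (by positivity), ← rpow_pow_comm hκ.le,
            two_rpow_inv_sub_one_rpow hα, rpow_eq_rpow_sub_one_mul hP hα]
          field_simp
          ring
        _ ≤ (h - k) * (φ k₀ / (2 ^ (α - 1)⁻¹) ^ (n + 1)) := by
          rw [hgap]
          gcongr
    exact le_of_mul_le_mul_left ((hrec k h hk (by linarith)).trans hbound) hgap_pos

lemma eq_zero_of_sub_mul_le_rpow (hα : 1 < α) (hA : 0 ≤ A) (hφ : AntitoneOn φ (Ici k₀))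
    (hφ0 : ∀ k, 0 ≤ φ k) (hrec : ∀ k h, k₀ ≤ k → k < h → (h - k) * φ h ≤ A * φ k ^ α)
    (hd : 0 < d) (hdφ : 2 * 2 ^ (α - 1)⁻¹ * A * φ k₀ ^ (α - 1) ≤ d) : φ (k₀ + d) = 0 := by
  have hκ : 1 < (2 : ℝ) ^ (α - 1)⁻¹ := one_lt_rpow one_lt_two (by simpa using hα)
  have hlim : Tendsto (fun n : ℕ => φ k₀ / (2 ^ (α - 1)⁻¹) ^ n) atTop (𝓝 0) := by
    simpa [div_eq_mul_inv] using
      (tendsto_pow_atTop_nhds_zero_of_lt_one (by positivity)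
        (inv_lt_one_of_one_lt₀ hκ)).const_mul (φ k₀)
  refine le_antisymm (ge_of_tendsto' hlim fun n => ?_) (hφ0 _)
  have hdn : d / 2 ^ n ≤ d := div_le_self hd.le (one_le_pow₀ one_le_two)
  refine (hφ ?_ ?_ ?_).trans (le_div_pow_of_sub_mul_le_rpow hα hA hφ0 hrec hd hdφ n)
  · exact mem_Ici.mpr (by linarith)
  · exact mem_Ici.mpr (by linarith)
  · linarith [div_pos hd (pow_pos two_pos n)]

end Iteration

section Truncation

variable {X : Type*} [MeasurableSpace X] {μ : Measure X} {f : X → ℝ}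

lemma integrable_abs_Sk (hf : Integrable f μ) {k : ℝ} (hk : 0 ≤ k) :
    Integrable (fun x => |Sk k (f x)|) μ := by
  simp_rw [abs_Sk hk]
  refine hf.mono (hf.1.norm.sub aestronglyMeasurable_const |>.sup aestronglyMeasurable_const) ?_
  filter_upwards with x
  rw [norm_eq_abs, norm_eq_abs, abs_of_nonneg (le_max_right _ _)]
  exact max_le (by linarith [abs_nonneg (f x)]) (abs_nonneg _)

lemma sub_mul_measureReal_lt_abs_le_integral_abs_Sk [IsFiniteMeasure μ] (hf : Integrable f μ)
    {k h : ℝ} (hk : 0 ≤ k) (hkh : k < h) :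
    (h - k) * μ.real {x | h < |f x|} ≤ ∫ x, |Sk k (f x)| ∂μ :=
  calc (h - k) * μ.real {x | h < |f x|}
      ≤ (h - k) * μ.real {x | h - k ≤ |Sk k (f x)|} := by
        refine mul_le_mul_of_nonneg_left (measureReal_mono fun x hx => ?_) (by linarith)
        simp only [mem_ofPred_eq, abs_Sk hk] at hx ⊢
        exact le_max_of_le_left (by linarith)
    _ ≤ ∫ x, |Sk k (f x)| ∂μ :=
        mul_meas_ge_le_integral_of_nonneg (ae_of_all _ fun _ => abs_nonneg _)
          (integrable_abs_Sk hf hk) _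

theorem ae_abs_le_of_integral_abs_Sk_le [IsFiniteMeasure μ] {α A : ℝ} (hf : Integrable f μ)
    (hα : 1 < α) (hA : 0 < A)
    (hS : ∀ k, 0 < k → ∫ x, |Sk k (f x)| ∂μ ≤ A * μ.real {x | k < |f x|} ^ α) :
    ∀ᵐ x ∂μ, |f x| ≤ (1 + 2 * 2 ^ (α - 1)⁻¹) * A ^ (1 / α) * (∫ x, |f x| ∂μ) ^ (1 - 1 / α) := by
  set I := ∫ x, |f x| ∂μ
  have hI₀ : 0 ≤ I := integral_nonneg fun x => abs_nonneg (f x)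
  rcases hI₀.eq_or_lt with hI | hI
  · have hf0 := (integral_eq_zero_iff_of_nonneg (fun x => abs_nonneg (f x)) hf.abs).mp hI.symm
    filter_upwards [hf0] with x hx
    rw [hx, Pi.zero_apply]
    exact mul_nonneg (by positivity) (rpow_nonneg hI₀ _)
  set k₀ := A ^ (1 / α) * I ^ (1 - 1 / α)
  have hk₀ : 0 < k₀ := by positivity
  have hrec : ∀ k h, k₀ ≤ k → k < h →
      (h - k) * μ.real {x | h < |f x|} ≤ A * μ.real {x | k < |f x|} ^ α := fun k h hk hkh =>
    (sub_mul_measureReal_lt_abs_le_integral_abs_Sk hf (hk₀.le.trans hk) hkh).trans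
      (hS k (hk₀.trans_le hk))
  have hcheb : k₀ * μ.real {x | k₀ < |f x|} ≤ I := by
    simpa only [Sk_zero, sub_zero] using sub_mul_measureReal_lt_abs_le_integral_abs_Sk hf le_rfl hk₀
  have hzero : μ.real {x | k₀ + 2 * 2 ^ (α - 1)⁻¹ * k₀ < |f x|} = 0 := by
    refine eq_zero_of_sub_mul_le_rpow (φ := fun k => μ.real {x | k < |f x|}) hα hA.le
      (fun a _ b _ hab => measureReal_mono fun x hx => hab.trans_lt hx)
      (fun _ => measureReal_nonneg) hrec (by positivity) ?_
    rw [mul_assoc]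
    gcongr
    exact mul_rpow_sub_one_le_of_mul_le hα hA hI measureReal_nonneg hcheb
  rw [measureReal_eq_zero_iff] at hzero
  filter_upwards [measure_eq_zero_iff_ae_notMem.mp hzero] with x hx
  rw [not_lt] at hx
  linarith

end Truncation

/-- If `w ∈ L¹(Ω)` on a bounded domain `Ω ⊂ ℝ^N` satisfies
`∫_Ω |S_k(w)| dx ≤ A |{|w| > k}|^α` for all `k > 0` with `α > 1`, `A > 0`, then
`w ∈ L^∞(Ω)` with `‖w‖_{L^∞(Ω)} ≤ c A^{1/α} ‖w‖_{L¹(Ω)}^{1-1/α}`, where `c > 0`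
depends only on `α`. -/
theorem Linfty_bound_from_truncation_decay (α : ℝ) (hα : 1 < α) :
    ∃ c : ℝ, 0 < c ∧
      ∀ (N : ℕ) (Ω : Set (EuclideanSpace ℝ (Fin N))) (w : EuclideanSpace ℝ (Fin N) → ℝ)
        (A : ℝ),
        IsOpen Ω → IsConnected Ω → Bornology.IsBounded Ω →
        Integrable w (volume.restrict Ω) →
        0 < A →
        (∀ k : ℝ, 0 < k →
          (∫ x in Ω, |Sk k (w x)|) ≤
            A * (volume {x ∈ Ω | k < |w x|}).toReal ^ α) →
        MemLp w ⊤ (volume.restrict Ω) ∧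
          eLpNorm w ⊤ (volume.restrict Ω) ≤
            ENNReal.ofReal (c * A ^ (1 / α) * (∫ x in Ω, |w x|) ^ (1 - 1 / α)) := by
  refine ⟨1 + 2 * 2 ^ (α - 1)⁻¹, by positivity, ?_⟩
  intro N Ω w A hΩ _ hΩb hw hA hS
  have : IsFiniteMeasure (volume.restrict Ω) :=
    isFiniteMeasure_restrict.mpr hΩb.measure_lt_top.ne
  have hbound := ae_abs_le_of_integral_abs_Sk_le hw hα hA fun k hk => by
    rw [measureReal_restrict_apply' hΩ.measurableSet, inter_comm]
    exact hS k hk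
  simp_rw [← norm_eq_abs] at hbound
  refine ⟨memLp_top_of_bound hw.1 _ hbound, ?_⟩
  rw [eLpNorm_exponent_top]
  exact eLpNormEssSup_le_of_ae_bound hbound
end

section
/- Let N ≥ 3 be an integer, μ_0 = −(N−2)²/4, μ > (3/4)μ_0, and τ_+ = −(N−2)/2 + √(μ−μ_0). Then for every smooth compactly supported function u ∈ C_c^∞(ℝ^N), ∫_{ℝ^N} ( |∇u(x)|² − 2τ_+ ‖x‖^{−2} (x·∇u(x)) u(x) ) dx ≥ min{1, 1 + 4τ_+/(N−2)} · ∫_{ℝ^N} |∇u(x)|² dx, and the coercivity constant min{1, 1 + 4τ_+/(N−2)} is strictly positive. -/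
/-!
Write `X = ∫ ‖x‖⁻² ⟪x, ∇u⟫ u` and `J = ∫ ‖x‖⁻² u²`. At `x = r • ω` with `‖ω‖ = 1`,
`r ^ (N - 1) ‖x‖⁻² (⟪x, ∇v⟫ + (N - 2) v)` is `d/dr (r ^ (N - 2) v (r • ω))`, so in polar coordinates
its integral vanishes; for `v = u²` this reads `2X = -(N - 2) J`, and the form equals
`∫ ‖∇u‖² + τ (N - 2) J`. Expanding `0 ≤ ∫ ‖∇u + ((N - 2) / 2) ‖x‖⁻² u x‖²` with the same identity
gives Hardy's inequality `((N - 2) / 2)² J ≤ ∫ ‖∇u‖²`. For `τ ≥ 0` the form is at least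
`∫ ‖∇u‖²`; for `τ < 0` Hardy bounds `τ (N - 2) J` below by `4τ / (N - 2) ∫ ‖∇u‖²`.
Finally `μ > 3μ₀ / 4` says exactly `τ > -(N - 2) / 4`, i.e. `1 + 4τ / (N - 2) > 0`.
-/

open Real MeasureTheory Set Metric Filter Topology Module

section Polar

variable {E F : Type*} [NormedAddCommGroup E] [NormedSpace ℝ E] [NormedAddCommGroup F]

theorem integral_volumeIoiPow [NormedSpace ℝ F] (n : ℕ) (h : ℝ → F) :
    ∫ r : Ioi (0 : ℝ), h r ∂(Measure.volumeIoiPow n) = ∫ r in Ioi (0 : ℝ), r ^ n • h r := by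
  simp only [Measure.volumeIoiPow, ENNReal.ofReal]
  rw [integral_withDensity_eq_integral_smul
      ((measurable_subtype_coe.pow_const _).real_toNNReal),
    integral_subtype_comap measurableSet_Ioi (fun a => (a ^ n).toNNReal • h a)]
  refine setIntegral_congr_fun measurableSet_Ioi fun r hr => ?_
  rw [NNReal.smul_def, Real.coe_toNNReal _ (pow_nonneg hr.out.le _)]

omit [NormedAddCommGroup F] in
theorem homeomorphUnitSphereProd_snd_smul_fst (x : ({0}ᶜ : Set E)) :
    ((homeomorphUnitSphereProd E x).2 : ℝ) • ((homeomorphUnitSphereProd E x).1 : E) = x := by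
  rw [homeomorphUnitSphereProd_apply_snd_coe, homeomorphUnitSphereProd_apply_fst_coe,
    smul_smul, mul_inv_cancel₀ (norm_ne_zero_iff.2 x.2), one_smul]

variable [Nontrivial E] [FiniteDimensional ℝ E] [MeasurableSpace E] [BorelSpace E]
  (μ : Measure E) [μ.IsAddHaarMeasure]

theorem integrable_iff_integrable_toSphere_prod (f : E → F) :
    Integrable f μ ↔
      Integrable (fun p : sphere (0 : E) 1 × Ioi (0 : ℝ) => f ((p.2 : ℝ) • (p.1 : E)))
        (μ.toSphere.prod (Measure.volumeIoiPow (finrank ℝ E - 1))) := by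
  rw [← μ.measurePreserving_homeomorphUnitSphereProd.integrable_comp_emb
    (Homeomorph.measurableEmbedding _), Function.comp_def]
  simp only [homeomorphUnitSphereProd_snd_smul_fst]
  rw [← Function.comp_def f, ← integrableOn_iff_comap_subtypeVal (measurableSet_singleton 0).compl,
    IntegrableOn, restrict_compl_singleton]

theorem integral_eq_integral_toSphere_prod [NormedSpace ℝ F] (f : E → F) :
    ∫ x, f x ∂μ = ∫ p : sphere (0 : E) 1 × Ioi (0 : ℝ), f ((p.2 : ℝ) • (p.1 : E))
      ∂(μ.toSphere.prod (Measure.volumeIoiPow (finrank ℝ E - 1))) := by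
  rw [← μ.measurePreserving_homeomorphUnitSphereProd.integral_comp
    (Homeomorph.measurableEmbedding _)]
  simp only [homeomorphUnitSphereProd_snd_smul_fst]
  rw [integral_subtype_comap (measurableSet_singleton 0).compl, restrict_compl_singleton]

theorem integral_eq_integral_sphere_integral_Ioi [NormedSpace ℝ F] [CompleteSpace F] {f : E → F}
    (hf : Integrable f μ) :
    ∫ x, f x ∂μ = ∫ ω : sphere (0 : E) 1,
      (∫ r in Ioi (0 : ℝ), r ^ (finrank ℝ E - 1) • f (r • (ω : E))) ∂μ.toSphere := by
  rw [integral_eq_integral_toSphere_prod μ,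
    integral_prod _ ((integrable_iff_integrable_toSphere_prod μ f).1 hf)]
  exact integral_congr_ae (ae_of_all _ fun ω => integral_volumeIoiPow _ fun r => f (r • (ω : E)))

end Polar

section Integrability

variable {E : Type*} [NormedAddCommGroup E] [NormedSpace ℝ E] [Nontrivial E]
  [FiniteDimensional ℝ E] [MeasurableSpace E] [BorelSpace E] {μ : Measure E} [μ.IsAddHaarMeasure]

theorem locallyIntegrable_norm_rpow_neg {s : ℝ} (hs : s < finrank ℝ E) :
    LocallyIntegrable (fun x : E => ‖x‖ ^ (-s)) μ := by
  refine locallyIntegrable_of_norm_le_rpow finrank_pos hs (C := 1) (ae_of_all _ fun x => ?_) ?_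
  · rw [one_mul, norm_of_nonneg (rpow_nonneg (norm_nonneg x) _)]
  · exact (measurable_norm.pow_const _).aestronglyMeasurable

theorem HasCompactSupport.integrable_norm_rpow_neg_mul {s : ℝ} (hs : s < finrank ℝ E)
    {ψ : E → ℝ} (hψ : Continuous ψ) (hψc : HasCompactSupport ψ) :
    Integrable (fun x => ‖x‖ ^ (-s) * ψ x) μ :=
  (locallyIntegrable_norm_rpow_neg hs).integrable_smul_right_of_hasCompactSupport hψ hψc

end Integrability

section RadialIntegrationByParts

theorem integral_Ioi_deriv_pow_succ_mul_eq_zero {φ : ℝ → ℝ} (hφ : ContDiff ℝ 1 φ)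
    (hφc : HasCompactSupport φ) (k : ℕ) :
    ∫ r in Ioi (0 : ℝ), ((k + 1) * r ^ k * φ r + r ^ (k + 1) * deriv φ r) = 0 := by
  set F : ℝ → ℝ := fun r => r ^ (k + 1) * φ r
  have hF : ∀ r, HasDerivAt F ((k + 1) * r ^ k * φ r + r ^ (k + 1) * deriv φ r) r := fun r =>
    ((hasDerivAt_pow (k + 1) r).mul ((hφ.differentiable one_ne_zero) r).hasDerivAt).congr_deriv
      (by simp)
  have hF'c : Continuous fun r => (k + 1) * r ^ k * φ r + r ^ (k + 1) * deriv φ r := by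
    have := hφ.continuous_deriv le_rfl
    fun_prop
  have hF'i : Integrable fun r => (k + 1) * r ^ k * φ r + r ^ (k + 1) * deriv φ r :=
    hF'c.integrable_of_hasCompactSupport (hφc.mul_left.add hφc.deriv.mul_left)
  have hFlim : Tendsto F atTop (𝓝 0) :=
    (hφc.mul_left.is_zero_at_infty).mono_left atTop_le_cocompact
  simpa [F] using integral_Ioi_of_hasDerivAt_of_tendsto
    (hF 0).continuousAt.continuousWithinAt (fun r _ => hF r) hF'i.integrableOn hFlim

variable {E : Type*} [NormedAddCommGroup E] [NormedSpace ℝ E]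

theorem integral_Ioi_pow_mul_norm_rpow_neg_two_eq_zero {v : E → ℝ} (hv : ContDiff ℝ 1 v)
    (hvc : HasCompactSupport v) {ω : E} (hω : ‖ω‖ = 1) (k : ℕ) :
    ∫ r in Ioi (0 : ℝ), r ^ (k + 2) *
      (‖r • ω‖ ^ (-2 : ℝ) * (fderiv ℝ v (r • ω) (r • ω) + (k + 1) * v (r • ω))) = 0 := by
  set φ : ℝ → ℝ := fun r => v (r • ω)
  have hφ : ContDiff ℝ 1 φ := hv.comp (contDiff_id.smul contDiff_const)
  have hφc : HasCompactSupport φ :=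
    hvc.comp_isClosedEmbedding (isClosedEmbedding_smul_left (norm_ne_zero_iff.1 (by simp [hω])))
  have hφ' : ∀ r, deriv φ r = fderiv ℝ v (r • ω) ω := fun r => by
    have := ((hv.differentiable one_ne_zero) (r • ω)).hasFDerivAt.comp_hasDerivAt r
      ((hasDerivAt_id' r).smul_const ω)
    rw [one_smul] at this
    exact this.deriv
  refine (setIntegral_congr_fun measurableSet_Ioi fun r (hr : 0 < r) => ?_).trans
    (integral_Ioi_deriv_pow_succ_mul_eq_zero hφ hφc k)
  rw [hφ', norm_smul, hω, mul_one, norm_of_nonneg hr.le, map_smul, smul_eq_mul,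
    rpow_neg hr.le, rpow_two]
  field_simp
  ring

end RadialIntegrationByParts

section IntegrationByParts

variable {E : Type*} [NormedAddCommGroup E] [NormedSpace ℝ E] [FiniteDimensional ℝ E]
  [MeasurableSpace E] [BorelSpace E] {μ : Measure E} [μ.IsAddHaarMeasure]

theorem integral_norm_rpow_neg_two_mul_fderiv_self (hd : 3 ≤ finrank ℝ E) {v : E → ℝ}
    (hv : ContDiff ℝ 1 v) (hvc : HasCompactSupport v) :
    ∫ x, ‖x‖ ^ (-2 : ℝ) * fderiv ℝ v x x ∂μ =
      -((finrank ℝ E : ℝ) - 2) * ∫ x, ‖x‖ ^ (-2 : ℝ) * v x ∂μ := by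
  have : Nontrivial E := Module.nontrivial_of_finrank_pos (R := ℝ) (by omega)
  obtain ⟨k, hk⟩ : ∃ k, finrank ℝ E = k + 3 := ⟨_, (Nat.sub_add_cancel hd).symm⟩
  have hs : (2 : ℝ) < finrank ℝ E := by rw [hk]; push_cast; linarith
  have hDv : Integrable (fun x => ‖x‖ ^ (-2 : ℝ) * fderiv ℝ v x x) μ :=
    (hvc.fderiv (𝕜 := ℝ)).mono (fun x hx h => hx (by simp [h])) |>.integrable_norm_rpow_neg_mul
      hs ((hv.continuous_fderiv one_ne_zero).clm_apply continuous_id)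
  have hv' : Integrable (fun x => ‖x‖ ^ (-2 : ℝ) * v x) μ :=
    hvc.integrable_norm_rpow_neg_mul hs hv.continuous
  have hsum :
      ∫ x, (‖x‖ ^ (-2 : ℝ) * fderiv ℝ v x x + (k + 1) * (‖x‖ ^ (-2 : ℝ) * v x)) ∂μ = 0 := by
    refine (integral_eq_integral_sphere_integral_Ioi μ (hDv.add (hv'.const_mul _))).trans
      (integral_eq_zero_of_ae (ae_of_all _ fun ω => ?_))
    simpa [hk, mul_add, mul_left_comm _ ((k : ℝ) + 1)] using
      integral_Ioi_pow_mul_norm_rpow_neg_two_eq_zero hv hvc (norm_eq_of_mem_sphere ω) k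
  rw [integral_add hDv (hv'.const_mul _), integral_const_mul] at hsum
  rw [hk]
  push_cast
  linarith

end IntegrationByParts

section InnerProductSpace

variable {E : Type*} [NormedAddCommGroup E] [InnerProductSpace ℝ E]

theorem norm_add_mul_norm_rpow_neg_two_smul_sq (g x : E) (a t : ℝ) :
    ‖g + (a * (‖x‖ ^ (-2 : ℝ) * t)) • x‖ ^ 2 =
      ‖g‖ ^ 2 + (2 * a * (‖x‖ ^ (-2 : ℝ) * (inner ℝ x g * t)) +
        a ^ 2 * (‖x‖ ^ (-2 : ℝ) * t ^ 2)) := by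
  rw [norm_add_sq_real, norm_smul, real_inner_smul_right, real_inner_comm, mul_pow, norm_mul,
    norm_mul, norm_of_nonneg (rpow_nonneg (norm_nonneg x) _), Real.norm_eq_abs, Real.norm_eq_abs]
  -- at `x = 0` both sides are `‖g‖ ^ 2` because `0 ^ (-2 : ℝ) = 0`
  rcases eq_or_ne x 0 with rfl | hx
  · simp
  · have hx' : ‖x‖ ≠ 0 := norm_ne_zero_iff.2 hx
    rw [rpow_neg (norm_nonneg x), rpow_two]
    field_simp
    rw [sq_abs, sq_abs]
    ring

variable [CompleteSpace E]

theorem HasCompactSupport.gradient {f : E → ℝ} (hf : HasCompactSupport f) :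
    HasCompactSupport (gradient f) :=
  (hf.fderiv (𝕜 := ℝ)).comp_left (g := (InnerProductSpace.toDual ℝ E).symm) (map_zero _)

theorem ContDiff.continuous_gradient {f : E → ℝ} (hf : ContDiff ℝ 1 f) :
    Continuous (gradient f) :=
  (InnerProductSpace.toDual ℝ E).symm.continuous.comp (hf.continuous_fderiv one_ne_zero)

end InnerProductSpace

section Hardy

variable {E : Type*} [NormedAddCommGroup E] [InnerProductSpace ℝ E] [FiniteDimensional ℝ E]
  [MeasurableSpace E] [BorelSpace E] {μ : Measure E} [μ.IsAddHaarMeasure]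

theorem integral_norm_rpow_neg_two_mul_inner_gradient_mul_self (hd : 3 ≤ finrank ℝ E)
    {u : E → ℝ} (hu : ContDiff ℝ 1 u) (huc : HasCompactSupport u) :
    ∫ x, ‖x‖ ^ (-2 : ℝ) * (inner ℝ x (gradient u x) * u x) ∂μ =
      -(((finrank ℝ E : ℝ) - 2) / 2) * ∫ x, ‖x‖ ^ (-2 : ℝ) * u x ^ 2 ∂μ := by
  have hsq : ∀ x, fderiv ℝ (fun y => u y ^ 2) x x = 2 * (inner ℝ x (gradient u x) * u x) :=
    fun x => by
      rw [inner_gradient_right, fderiv_fun_pow 2 ((hu.differentiable one_ne_zero) x)]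
      simp only [smul_apply, smul_eq_mul, conj_trivial]
      ring
  have h := integral_norm_rpow_neg_two_mul_fderiv_self (μ := μ) hd (hu.pow 2)
    (huc.comp_left (g := fun t => t ^ 2) (zero_pow two_ne_zero))
  simp_rw [hsq, mul_left_comm _ (2 : ℝ)] at h
  rw [integral_const_mul] at h
  linarith

theorem integrable_norm_sq_gradient {u : E → ℝ} (hu : ContDiff ℝ 1 u)
    (huc : HasCompactSupport u) : Integrable (fun x => ‖gradient u x‖ ^ 2) μ := by
  have hc : HasCompactSupport fun x => ‖gradient u x‖ ^ 2 :=
    huc.gradient.comp_left (g := fun y => ‖y‖ ^ 2) (by simp)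
  exact (hu.continuous_gradient.norm.pow 2).integrable_of_hasCompactSupport hc

theorem integrable_norm_rpow_neg_two_mul_inner_gradient_mul_self (hd : 3 ≤ finrank ℝ E)
    {u : E → ℝ} (hu : ContDiff ℝ 1 u) (huc : HasCompactSupport u) :
    Integrable (fun x => ‖x‖ ^ (-2 : ℝ) * (inner ℝ x (gradient u x) * u x)) μ := by
  have : Nontrivial E := Module.nontrivial_of_finrank_pos (R := ℝ) (by omega)
  exact huc.mul_left.integrable_norm_rpow_neg_mul (by exact_mod_cast (by omega : 2 < finrank ℝ E))
    ((continuous_id.inner hu.continuous_gradient).mul hu.continuous)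

theorem hardy_inequality (hd : 3 ≤ finrank ℝ E) {u : E → ℝ} (hu : ContDiff ℝ 1 u)
    (huc : HasCompactSupport u) :
    (((finrank ℝ E : ℝ) - 2) / 2) ^ 2 * ∫ x, ‖x‖ ^ (-2 : ℝ) * u x ^ 2 ∂μ ≤
      ∫ x, ‖gradient u x‖ ^ 2 ∂μ := by
  have : Nontrivial E := Module.nontrivial_of_finrank_pos (R := ℝ) (by omega)
  have hX := integrable_norm_rpow_neg_two_mul_inner_gradient_mul_self (μ := μ) hd hu huc
  have hJ : Integrable (fun x => ‖x‖ ^ (-2 : ℝ) * u x ^ 2) μ :=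
    (huc.comp_left (g := fun t => t ^ 2) (zero_pow two_ne_zero)).integrable_norm_rpow_neg_mul
      (by exact_mod_cast (by omega : 2 < finrank ℝ E)) (hu.continuous.pow 2)
  have h0 : 0 ≤ ∫ x,
      ‖gradient u x + (((finrank ℝ E : ℝ) - 2) / 2 * (‖x‖ ^ (-2 : ℝ) * u x)) • x‖ ^ 2 ∂μ :=
    integral_nonneg fun x => sq_nonneg _
  simp_rw [norm_add_mul_norm_rpow_neg_two_smul_sq] at h0
  rw [integral_add (integrable_norm_sq_gradient hu huc)
      ((hX.const_mul _).fun_add (hJ.const_mul _)),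
    integral_add (hX.const_mul _) (hJ.const_mul _), integral_const_mul, integral_const_mul,
    integral_norm_rpow_neg_two_mul_inner_gradient_mul_self hd hu huc] at h0
  linear_combination h0

theorem integral_norm_sq_gradient_sub_inner_gradient_mul_self (hd : 3 ≤ finrank ℝ E)
    {u : E → ℝ} (hu : ContDiff ℝ 1 u) (huc : HasCompactSupport u) (τ : ℝ) :
    ∫ x, (‖gradient u x‖ ^ 2 - 2 * τ * ‖x‖ ^ (-2 : ℝ) * inner ℝ x (gradient u x) * u x) ∂μ =
      ∫ x, ‖gradient u x‖ ^ 2 ∂μ +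
        τ * ((finrank ℝ E : ℝ) - 2) * ∫ x, ‖x‖ ^ (-2 : ℝ) * u x ^ 2 ∂μ := by
  have hform : ∀ x, ‖gradient u x‖ ^ 2 - 2 * τ * ‖x‖ ^ (-2 : ℝ) * inner ℝ x (gradient u x) * u x =
      ‖gradient u x‖ ^ 2 - 2 * τ * (‖x‖ ^ (-2 : ℝ) * (inner ℝ x (gradient u x) * u x)) :=
    fun x => by ring
  simp_rw [hform]
  rw [integral_sub (integrable_norm_sq_gradient hu huc)
    ((integrable_norm_rpow_neg_two_mul_inner_gradient_mul_self hd hu huc).const_mul _),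
    integral_const_mul, integral_norm_rpow_neg_two_mul_inner_gradient_mul_self hd hu huc]
  ring

end Hardy

theorem min_one_one_add_div_mul_le {a τ K J : ℝ} (ha : 0 < a) (hJ : 0 ≤ J)
    (hH : (a / 2) ^ 2 * J ≤ K) :
    min 1 (1 + 4 * τ / a) * K ≤ K + τ * a * J := by
  have hK : 0 ≤ K := (mul_nonneg (sq_nonneg _) hJ).trans hH
  rcases le_or_gt 0 τ with hτ | hτ
  · calc min 1 (1 + 4 * τ / a) * K ≤ 1 * K := by gcongr; exact min_le_left _ _
      _ ≤ K + τ * a * J := by nlinarith [mul_nonneg (mul_nonneg hτ ha.le) hJ]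
  · calc min 1 (1 + 4 * τ / a) * K ≤ (1 + 4 * τ / a) * K := by gcongr; exact min_le_right _ _
      _ = K + τ * (4 * K / a) := by ring
      _ ≤ K + τ * (a * J) := by
        have hH' : a * J ≤ 4 * K / a := by
          rw [le_div_iff₀ ha]
          linear_combination 4 * hH
        linarith [mul_le_mul_of_nonpos_left hH' hτ.le]
      _ = K + τ * a * J := by ring

theorem one_add_four_mul_div_pos {a μ₀ μ τ : ℝ} (ha : 0 < a) (hμ₀ : μ₀ = -a ^ 2 / 4)
    (hμ : 3 / 4 * μ₀ < μ) (hτ : τ = -a / 2 + √(μ - μ₀)) :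
    0 < 1 + 4 * τ / a := by
  have hsqrt : a / 4 < √(μ - μ₀) :=
    Real.lt_sqrt_of_sq_lt (by rw [hμ₀] at hμ ⊢; linarith)
  have : -a < 4 * τ := by rw [hτ]; linarith
  have : -1 < 4 * τ / a := by rw [lt_div_iff₀ ha]; linarith
  linarith

/-- For `N ≥ 3`, `μ_0 = -(N-2)²/4`, `μ > (3/4)μ_0` and `τ_+ = -(N-2)/2 + √(μ-μ_0)`,
the quadratic form of the dual Leray–Hardy operator
`𝓛*_μ u = -Δu - 2τ_+ |x|^{-2} x·∇u` is coercive on `C_c^∞(ℝ^N)`: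
`∫ (|∇u|² - 2τ_+ ‖x‖^{-2} (x·∇u) u) ≥ min{1, 1 + 4τ_+/(N-2)} ∫ |∇u|²`,
and the constant `min{1, 1 + 4τ_+/(N-2)}` is strictly positive. -/
theorem dual_hardy_quadratic_form_coercive (N : ℕ) (hN : 3 ≤ N) (μ₀ μ τ : ℝ)
    (hμ₀ : μ₀ = -(((N : ℝ) - 2) ^ 2) / 4)
    (hμ : 3 / 4 * μ₀ < μ)
    (hτ : τ = -((N : ℝ) - 2) / 2 + Real.sqrt (μ - μ₀))
    (u : EuclideanSpace ℝ (Fin N) → ℝ)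
    (hu : ContDiff ℝ (⊤ : ℕ∞) u) (hsupp : HasCompactSupport u) :
    ((∫ x, (‖gradient u x‖ ^ 2 -
        2 * τ * ‖x‖ ^ (-2 : ℝ) * (inner ℝ x (gradient u x) : ℝ) * u x)) ≥
      min 1 (1 + 4 * τ / ((N : ℝ) - 2)) * ∫ x, ‖gradient u x‖ ^ 2) ∧
    0 < min 1 (1 + 4 * τ / ((N : ℝ) - 2)) := by
  have hd : finrank ℝ (EuclideanSpace ℝ (Fin N)) = N := finrank_euclideanSpace_fin
  have hN' : 3 ≤ finrank ℝ (EuclideanSpace ℝ (Fin N)) := by rwa [hd]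
  have ha : (0 : ℝ) < N - 2 := by
    have : (3 : ℝ) ≤ N := by exact_mod_cast hN
    linarith
  have hu1 : ContDiff ℝ 1 u := hu.of_le (by exact_mod_cast le_top)
  have hform := integral_norm_sq_gradient_sub_inner_gradient_mul_self (μ := volume)
    hN' hu1 hsupp τ
  have hH := hardy_inequality (μ := volume) hN' hu1 hsupp
  rw [hd] at hform hH
  refine ⟨?_, lt_min one_pos (one_add_four_mul_div_pos ha hμ₀ hμ hτ)⟩
  rw [ge_iff_le, hform]
  exact min_one_one_add_div_mul_le ha (integral_nonneg fun x =>
    mul_nonneg (rpow_nonneg (norm_nonneg x) _) (sq_nonneg _)) hH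
end
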